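/- Diagonal Mehler formula for Hermite polynomials: For every real u with |u| < 1 and every x ∈ ℝ, the series Σ_{a=0}^{∞} He_a(x)² · u^a / a! converges and equals (1 − u²)^{−1/2} · exp( (u/(1+u)) · x² ). -/

import Mathlib

/-!
Write `F x = ∑ₐ He_a(x)² uᵃ / a!`. From the three-term recurrence,
`|He_n x| ≤ √(n!) ∏_{k ≤ n} (1 + r / √k)` for `|x| ≤ r`; the product grows
subexponentially, so for `|u| < 1` the series and its termwise `x`-derivative
converge locally uniformly. Since `He_{a+1} = x He_a - He_a'`, the derivative series
satisfies `F' = 2 u x F - u F'`, i.e. `F' = 2 (u / (1 + u)) x F`, whence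
`F x = F 0 · exp (u x² / (1 + u))`. At `x = 0` the odd terms vanish and
`He_{2k}(0)² / (2k)! = (-1)ᵏ (-1/2 choose k)`, so `F 0` is the binomial series of
`(1 - u²)^(-1/2)`.
-/

open Polynomial Filter Topology
open scoped Nat

theorem Ring.succ_mul_choose_succ {R : Type*} [Field R] [CharZero R] (r : R) (n : ℕ) :
    (n + 1) * Ring.choose r (n + 1) = Ring.choose r n * (r - n) := by
  simpa [Nat.choose_succ_self_right] using Ring.choose_smul_choose r (Nat.le_succ n)

theorem Real.hasSum_choose_mul_pow {a y : ℝ} (hy : |y| < 1) :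
    HasSum (fun n => Ring.choose a n * y ^ n) ((1 + y) ^ a) := by
  have := (Real.one_add_rpow_hasFPowerSeriesOnBall_zero (a := a)).hasSum (y := y)
    (by simpa [enorm_eq_nnnorm, ← NNReal.coe_lt_one] using hy)
  simpa [binomialSeries, mul_comm] using this

theorem eq_mul_exp_of_hasDerivAt {f : ℝ → ℝ} {c : ℝ}
    (hf : ∀ y, HasDerivAt f (2 * c * y * f y) y) (x : ℝ) :
    f x = f 0 * Real.exp (c * x ^ 2) := by
  set g : ℝ → ℝ := fun y => f y * Real.exp (-(c * y ^ 2))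
  have hg (y : ℝ) : HasDerivAt g 0 y := by
    have := (hf y).fun_mul (((hasDerivAt_pow 2 y).const_mul c).fun_neg.exp)
    exact this.congr_deriv (by push_cast; ring)
  have hconst : g x = g 0 :=
    is_const_of_deriv_eq_zero (fun y => (hg y).differentiableAt) (fun y => (hg y).deriv) x 0
  simp only [g, zero_pow two_ne_zero, mul_zero, neg_zero, Real.exp_zero, mul_one] at hconst
  rw [← hconst, mul_assoc, ← Real.exp_add, neg_add_cancel, Real.exp_zero, mul_one]

namespace Polynomial

theorem derivative_hermite_succ (n : ℕ) :
    derivative (hermite (n + 1)) = (n + 1 : ℤ[X]) * hermite n := by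
  induction n with
  | zero => simp
  | succ n ih =>
    rw [hermite_succ (n + 1), derivative_sub, derivative_mul, derivative_X, ih,
      derivative_mul, hermite_succ n]
    push_cast
    simp only [derivative_add, derivative_natCast, derivative_one]
    ring

theorem hermite_succ_succ (n : ℕ) :
    hermite (n + 2) = X * hermite (n + 1) - (n + 1 : ℤ[X]) * hermite n := by
  rw [hermite_succ (n + 1), derivative_hermite_succ]

theorem aeval_hermite_succ_succ {R : Type*} [CommRing R] (n : ℕ) (x : R) :
    aeval x (hermite (n + 2)) =
      x * aeval x (hermite (n + 1)) - (n + 1) * aeval x (hermite n) := by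
  rw [hermite_succ_succ, map_sub, map_mul, map_mul, aeval_X]
  simp

theorem aeval_zero_hermite_two_mul_add_one {R : Type*} [CommRing R] (k : ℕ) :
    aeval (0 : R) (hermite (2 * k + 1)) = 0 := by
  induction k with
  | zero => simp
  | succ k ih =>
    rw [show 2 * (k + 1) + 1 = 2 * k + 1 + 2 by ring, aeval_hermite_succ_succ, ih]
    simp

theorem aeval_zero_hermite_sq_div_factorial (k : ℕ) :
    aeval (0 : ℝ) (hermite (2 * k)) ^ 2 / (2 * k)! =
      Ring.choose (-(1 / 2) : ℝ) k * (-1) ^ k := by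
  induction k with
  | zero => simp
  | succ k ih =>
    have hrec : aeval (0 : ℝ) (hermite (2 * (k + 1))) =
        -(2 * k + 1) * aeval (0 : ℝ) (hermite (2 * k)) := by
      rw [show 2 * (k + 1) = 2 * k + 2 by ring, aeval_hermite_succ_succ]; push_cast; ring
    have hfact : ((2 * (k + 1))! : ℝ) = (2 * k + 2) * (2 * k + 1) * (2 * k)! := by
      rw [show 2 * (k + 1) = 2 * k + 1 + 1 by ring, Nat.factorial_succ, Nat.factorial_succ]
      push_cast; ring
    have hchoose := Ring.succ_mul_choose_succ (-(1 / 2) : ℝ) k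
    rw [div_eq_iff (by positivity)] at ih
    rw [hrec, hfact, div_eq_iff (by positivity)]
    linear_combination (2 * k + 1) ^ 2 * ih + 2 * (2 * k + 1) * (-1) ^ k * (2 * k)! * hchoose

end Polynomial

noncomputable def mehlerTerm (u : ℝ) (n : ℕ) (x : ℝ) : ℝ :=
  aeval x (hermite n) ^ 2 * u ^ n / n !

theorem hasSum_mehlerTerm_zero {u : ℝ} (hu : |u| < 1) :
    HasSum (fun n => mehlerTerm u n 0) ((1 - u ^ 2) ^ (-(1 / 2) : ℝ)) := by
  have hu2 : |-u ^ 2| < 1 := by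
    rw [abs_neg, abs_pow]; exact pow_lt_one₀ (abs_nonneg u) hu two_ne_zero
  have heven := Real.hasSum_choose_mul_pow (a := -(1 / 2)) hu2
  rw [← sub_eq_add_neg] at heven
  simpa using HasSum.even_add_odd (f := fun n => mehlerTerm u n 0)
    (heven.congr_fun fun k => by
      rw [mehlerTerm, mul_div_right_comm, aeval_zero_hermite_sq_div_factorial]; ring)
    (hasSum_zero.congr_fun fun k => by rw [mehlerTerm, aeval_zero_hermite_two_mul_add_one]; simp)

theorem Real.sqrt_factorial_succ (n : ℕ) : √((n + 1)! : ℝ) = √(n + 1) * √(n ! : ℝ) := by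
  rw [Nat.factorial_succ, Nat.cast_mul, Real.sqrt_mul (by positivity)]
  push_cast
  rfl

/-- A subexponentially growing envelope of `|He_n x| / √(n!)` on `|x| ≤ r`. -/
noncomputable def hermiteGrowth (r : ℝ) (n : ℕ) : ℝ :=
  ∏ k ∈ Finset.range n, (1 + r / √(k + 1))

section hermiteGrowth

variable {r : ℝ}

theorem hermiteGrowth_succ (r : ℝ) (n : ℕ) :
    hermiteGrowth r (n + 1) = hermiteGrowth r n * (1 + r / √(n + 1)) :=
  Finset.prod_range_succ _ n

theorem hermiteGrowth_pos (hr : 0 ≤ r) (n : ℕ) : 0 < hermiteGrowth r n :=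
  Finset.prod_pos fun _ _ => by positivity

theorem hermiteGrowth_mono (hr : 0 ≤ r) : Monotone (hermiteGrowth r) :=
  monotone_nat_of_le_succ fun n => by
    rw [hermiteGrowth_succ]
    exact le_mul_of_one_le_right (hermiteGrowth_pos hr n).le (by simp; positivity)

theorem summable_succ_mul_hermiteGrowth_sq_mul_pow (hr : 0 ≤ r) {ρ : ℝ} (hρ₀ : 0 ≤ ρ)
    (hρ : ρ < 1) : Summable fun n : ℕ => (n + 1) * hermiteGrowth r n ^ 2 * ρ ^ n := by
  set q : ℕ → ℝ := fun n => (n + 2) / (n + 1) * (1 + r / √(n + 1)) ^ 2 * ρ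
  have hstep (n : ℕ) : ((n + 1 : ℕ) + 1) * hermiteGrowth r (n + 1) ^ 2 * ρ ^ (n + 1) =
      q n * ((n + 1) * hermiteGrowth r n ^ 2 * ρ ^ n) := by
    simp only [q, hermiteGrowth_succ]
    push_cast
    field_simp
    ring
  have hq : Tendsto q atTop (𝓝 ρ) := by
    have h₁ : Tendsto (fun n : ℕ => ((n : ℝ) + 2) / (n + 1)) atTop (𝓝 1) := by
      have := tendsto_one_div_add_atTop_nhds_zero_nat.const_add (1 : ℝ)
      refine (by simpa using this : Tendsto _ _ _).congr fun n => ?_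
      field_simp
      ring
    have hsqrt : Tendsto (fun n : ℕ => √((n : ℝ) + 1)) atTop atTop :=
      Real.tendsto_sqrt_atTop.comp (tendsto_atTop_add_const_right _ 1 tendsto_natCast_atTop_atTop)
    have h₂ : Tendsto (fun n : ℕ => 1 + r / √(n + 1)) atTop (𝓝 1) := by
      simpa using (tendsto_const_nhds.div_atTop hsqrt).const_add 1
    simpa using (h₁.mul (h₂.pow 2)).mul_const ρ
  refine summable_of_ratio_norm_eventually_le (r := (1 + ρ) / 2) (by linarith) ?_
  filter_upwards [hq.eventually_lt_const (show ρ < (1 + ρ) / 2 by linarith)] with n hn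
  have hq₀ : 0 ≤ q n := by positivity
  have hf₀ : 0 ≤ (n + 1) * hermiteGrowth r n ^ 2 * ρ ^ n := by positivity
  rw [hstep, Real.norm_of_nonneg (mul_nonneg hq₀ hf₀), Real.norm_of_nonneg hf₀]
  exact mul_le_mul_of_nonneg_right hn.le hf₀

end hermiteGrowth

theorem abs_aeval_hermite_le {r x : ℝ} (hx : |x| ≤ r) (n : ℕ) :
    |aeval x (hermite n)| ≤ √(n ! : ℝ) * hermiteGrowth r n := by
  have hr : 0 ≤ r := (abs_nonneg x).trans hx
  induction n using Nat.twoStepInduction with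
  | zero => simp [hermiteGrowth]
  | one => simpa [hermiteGrowth] using hx.trans (le_add_of_nonneg_left zero_le_one)
  | more n ih₀ ih₁ =>
    have hn : (n + 1 : ℝ) * √(n ! : ℝ) ≤ √(n + 2) * √((n + 1)! : ℝ) :=
      calc (n + 1 : ℝ) * √(n ! : ℝ) = √(n + 1) * √((n + 1)! : ℝ) := by
            rw [Real.sqrt_factorial_succ, ← mul_assoc, Real.mul_self_sqrt (by positivity)]
        _ ≤ √(n + 2) * √((n + 1)! : ℝ) := by gcongr; linarith
    have hmono := hermiteGrowth_mono hr (Nat.le_succ n)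
    have hpos := hermiteGrowth_pos hr n
    calc |aeval x (hermite (n + 2))|
        ≤ |x| * |aeval x (hermite (n + 1))| + (n + 1) * |aeval x (hermite n)| := by
          rw [aeval_hermite_succ_succ]
          refine (abs_sub _ _).trans_eq ?_
          rw [abs_mul, abs_mul, abs_of_nonneg (by positivity : (0 : ℝ) ≤ n + 1)]
      _ ≤ r * (√((n + 1)! : ℝ) * hermiteGrowth r (n + 1)) +
            (n + 1) * √(n ! : ℝ) * hermiteGrowth r n := by
          rw [mul_assoc _ (√(n ! : ℝ))]
          gcongr
      _ ≤ r * (√((n + 1)! : ℝ) * hermiteGrowth r (n + 1)) +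
            √(n + 2) * √((n + 1)! : ℝ) * hermiteGrowth r (n + 1) := by
          gcongr
      _ = √((n + 2)! : ℝ) * hermiteGrowth r (n + 2) := by
          rw [hermiteGrowth_succ r (n + 1), Real.sqrt_factorial_succ (n + 1)]
          push_cast
          rw [show (n : ℝ) + 1 + 1 = n + 2 by ring]
          field_simp
          ring

theorem abs_aeval_derivative_hermite_le {r x : ℝ} (hx : |x| ≤ r) (n : ℕ) :
    |aeval x (derivative (hermite n))| ≤ n * √(n ! : ℝ) * hermiteGrowth r n := by
  have hr : 0 ≤ r := (abs_nonneg x).trans hx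
  cases n with
  | zero => simp
  | succ n =>
    rw [derivative_hermite_succ, map_mul, abs_mul]
    have hfact : √(n ! : ℝ) ≤ √((n + 1)! : ℝ) := by gcongr; exact n.le_succ
    have hmono := hermiteGrowth_mono hr n.le_succ
    calc |aeval x ((n + 1 : ℤ[X]))| * |aeval x (hermite n)|
        ≤ (n + 1) * (√(n ! : ℝ) * hermiteGrowth r n) := by
          gcongr
          · simp [abs_of_nonneg (by positivity : (0 : ℝ) ≤ n + 1)]
          · exact abs_aeval_hermite_le hx n
      _ ≤ ((n + 1 : ℕ) : ℝ) * √((n + 1)! : ℝ) * hermiteGrowth r (n + 1) := by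
          have := hermiteGrowth_pos hr n
          push_cast
          rw [mul_assoc]
          gcongr

noncomputable def mehlerTermDeriv (u : ℝ) (n : ℕ) (x : ℝ) : ℝ :=
  2 * aeval x (hermite n) * aeval x (derivative (hermite n)) * u ^ n / n !

theorem hasDerivAt_mehlerTerm (u : ℝ) (n : ℕ) (x : ℝ) :
    HasDerivAt (mehlerTerm u n) (mehlerTermDeriv u n x) x := by
  have h := (((hermite n).hasDerivAt_aeval x).fun_pow 2).mul_const (u ^ n / n !)
  rw [show mehlerTerm u n = fun y => aeval y (hermite n) ^ 2 * (u ^ n / n !) from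
    funext fun y => mul_div_assoc _ _ _]
  exact h.congr_deriv (by rw [mehlerTermDeriv]; push_cast; ring)

theorem mehlerTermDeriv_succ (u : ℝ) (n : ℕ) (x : ℝ) :
    mehlerTermDeriv u (n + 1) x = 2 * u * x * mehlerTerm u n x - u * mehlerTermDeriv u n x := by
  rw [mehlerTermDeriv, mehlerTermDeriv, mehlerTerm, derivative_hermite_succ, hermite_succ n]
  simp only [map_mul, map_sub, map_add, map_one, map_natCast, aeval_X, Nat.factorial_succ]
  push_cast
  field_simp
  ring

section bounds

variable {u r x : ℝ}

theorem abs_mehlerTerm_le (hx : |x| ≤ r) (n : ℕ) :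
    |mehlerTerm u n x| ≤ hermiteGrowth r n ^ 2 * |u| ^ n := by
  have hfact : (0 : ℝ) < n ! := by positivity
  have hsq : |aeval x (hermite n)| ^ 2 ≤ n ! * hermiteGrowth r n ^ 2 := by
    calc |aeval x (hermite n)| ^ 2 ≤ (√(n ! : ℝ) * hermiteGrowth r n) ^ 2 := by
          gcongr; exact abs_aeval_hermite_le hx n
      _ = n ! * hermiteGrowth r n ^ 2 := by rw [mul_pow, Real.sq_sqrt hfact.le]
  rw [mehlerTerm, abs_div, abs_mul, abs_pow, abs_pow, Nat.abs_cast, div_le_iff₀ hfact]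
  calc |aeval x (hermite n)| ^ 2 * |u| ^ n ≤ n ! * hermiteGrowth r n ^ 2 * |u| ^ n := by gcongr
    _ = _ := by ring

theorem abs_mehlerTermDeriv_le (hx : |x| ≤ r) (n : ℕ) :
    |mehlerTermDeriv u n x| ≤ 2 * (n * hermiteGrowth r n ^ 2 * |u| ^ n) := by
  have hfact : (0 : ℝ) < n ! := by positivity
  have hprod : |aeval x (hermite n)| * |aeval x (derivative (hermite n))| ≤
      n * n ! * hermiteGrowth r n ^ 2 := by
    calc |aeval x (hermite n)| * |aeval x (derivative (hermite n))|
        ≤ (√(n ! : ℝ) * hermiteGrowth r n) * (n * √(n ! : ℝ) * hermiteGrowth r n) := by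
          have := hermiteGrowth_pos ((abs_nonneg x).trans hx) n
          exact mul_le_mul (abs_aeval_hermite_le hx n) (abs_aeval_derivative_hermite_le hx n)
            (abs_nonneg _) (by positivity)
      _ = n * (√(n ! : ℝ) * √(n ! : ℝ)) * hermiteGrowth r n ^ 2 := by ring
      _ = n * n ! * hermiteGrowth r n ^ 2 := by rw [Real.mul_self_sqrt hfact.le]
  rw [mehlerTermDeriv, abs_div, abs_mul, abs_mul, abs_mul, abs_pow, Nat.abs_cast, abs_two,
    div_le_iff₀ hfact]
  calc 2 * |aeval x (hermite n)| * |aeval x (derivative (hermite n))| * |u| ^ n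
      = 2 * (|aeval x (hermite n)| * |aeval x (derivative (hermite n))|) * |u| ^ n := by ring
    _ ≤ 2 * (n * n ! * hermiteGrowth r n ^ 2) * |u| ^ n := by gcongr
    _ = _ := by ring

end bounds

theorem summable_mehlerTerm {u : ℝ} (hu : |u| < 1) (x : ℝ) :
    Summable fun n => mehlerTerm u n x := by
  refine .of_norm_bounded
    (summable_succ_mul_hermiteGrowth_sq_mul_pow (abs_nonneg x) (abs_nonneg u) hu) fun n => ?_
  refine (abs_mehlerTerm_le le_rfl n).trans ?_
  rw [mul_assoc]
  exact le_mul_of_one_le_left (by positivity) (by simp)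

theorem summable_mehlerTermDeriv {u : ℝ} (hu : |u| < 1) (x : ℝ) :
    Summable fun n => mehlerTermDeriv u n x := by
  refine .of_norm_bounded
    ((summable_succ_mul_hermiteGrowth_sq_mul_pow (abs_nonneg x) (abs_nonneg u) hu).mul_left 2)
    fun n => (abs_mehlerTermDeriv_le le_rfl n).trans ?_
  gcongr
  linarith

theorem hasDerivAt_tsum_mehlerTerm {u : ℝ} (hu : |u| < 1) (y : ℝ) :
    HasDerivAt (fun x => ∑' n, mehlerTerm u n x) (∑' n, mehlerTermDeriv u n y) y := by
  have hy : y ∈ Metric.ball (0 : ℝ) (|y| + 1) := by simp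
  refine hasDerivAt_tsum_of_isPreconnected
    ((summable_succ_mul_hermiteGrowth_sq_mul_pow (r := |y| + 1) (by positivity) (abs_nonneg u)
      hu).mul_left 2)
    Metric.isOpen_ball (convex_ball _ _).isPreconnected (fun n z _ => hasDerivAt_mehlerTerm u n z)
    (fun n z hz => ?_) hy (summable_mehlerTerm hu y) hy
  refine (abs_mehlerTermDeriv_le (mem_ball_zero_iff.1 hz).le n).trans ?_
  gcongr
  linarith

theorem tsum_mehlerTermDeriv {u : ℝ} (hu : |u| < 1) (x : ℝ) :
    ∑' n, mehlerTermDeriv u n x = 2 * (u / (1 + u)) * x * ∑' n, mehlerTerm u n x := by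
  set S := ∑' n, mehlerTermDeriv u n x
  set F := ∑' n, mehlerTerm u n x
  have hS : HasSum (fun n => mehlerTermDeriv u n x) S := (summable_mehlerTermDeriv hu x).hasSum
  have hshift : HasSum (fun n => mehlerTermDeriv u (n + 1) x) S := by
    rw [← hasSum_nat_add_iff' 1] at hS
    simpa [mehlerTermDeriv] using hS
  have hrec : HasSum (fun n => mehlerTermDeriv u (n + 1) x) (2 * u * x * F - u * S) := by
    simp only [mehlerTermDeriv_succ]
    exact ((summable_mehlerTerm hu x).hasSum.mul_left _).sub (hS.mul_left u)
  have h1u : 0 < 1 + u := by linarith [neg_abs_le u]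
  have heq := hshift.unique hrec
  field_simp
  linarith

theorem stmt_8 (u x : ℝ) (hu : |u| < 1) :
    HasSum (fun a : ℕ => (Polynomial.aeval x (Polynomial.hermite a) : ℝ) ^ 2 * u ^ a /
        (a.factorial : ℝ))
      ((1 - u ^ 2) ^ (-(1 / 2 : ℝ)) * Real.exp (u / (1 + u) * x ^ 2)) := by
  have hode (y : ℝ) : HasDerivAt (fun x => ∑' n, mehlerTerm u n x)
      (2 * (u / (1 + u)) * y * ∑' n, mehlerTerm u n y) y :=
    tsum_mehlerTermDeriv hu y ▸ hasDerivAt_tsum_mehlerTerm hu y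
  have hF := (summable_mehlerTerm hu x).hasSum
  rwa [eq_mul_exp_of_hasDerivAt hode x, (hasSum_mehlerTerm_zero hu).tsum_eq] at hF
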